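/- Let $\mathcal{H}$ be a Hilbert space, $U$ a unitary operator on $\mathcal{H}$, $h \in \mathcal{H}$, $K \subseteq \mathbb{T}$, $g \in \mathcal{H}$, and $\lambda \mapsto h_\lambda$ a map from $K$ to $\mathcal{H}$. Suppose that for every $\lambda \in K$: $U^{-1} h_\lambda = \lambda^{-1} h_\lambda + \lambda^{-1} h$, $\langle h_\lambda, Ug \rangle = \lambda^{-1}$, and $\langle h, Ug \rangle = 0$. Let $\mathcal{K} = \overline{\mathrm{span}}\{h_\lambda : \lambda \in K\}$. If $h \in \mathcal{K}$, then $U^{-1} h \in \mathcal{K}$. -/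

import Mathlib

/-!
The bounded operator `T x = U⁻¹ x - ⟪Ug, x⟫ h` acts on each `h_λ` as multiplication by `λ⁻¹`,
so it leaves the span of the `h_λ`, hence by continuity its closure `𝒦`, invariant.
Since `⟪Ug, h⟫ = 0`, we have `T h = U⁻¹ h`, so `h ∈ 𝒦` gives `U⁻¹ h ∈ 𝒦`.
-/

open Set

theorem Submodule.mapsTo_topologicalClosure_span {R M : Type*} [Semiring R] [TopologicalSpace M]
    [AddCommMonoid M] [Module R M] [ContinuousAdd M] [ContinuousConstSMul R M]
    (T : M →L[R] M) {s : Set M} (hT : ∀ x ∈ s, T x ∈ span R s) :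
    MapsTo T (span R s).topologicalClosure (span R s).topologicalClosure := by
  have hspan : MapsTo T (span R s) (span R s) := fun _ hx ↦
    (span_le (p := (span R s).comap (T : M →ₗ[R] M))).2 hT hx
  simpa only [topologicalClosure_coe] using hspan.closure T.continuous

theorem stmt_18 {H : Type*} [NormedAddCommGroup H] [InnerProductSpace ℂ H] [CompleteSpace H]
    (U : H ≃ₗᵢ[ℂ] H) (g h : H) (K : Set ℂ)
    (hl : ℂ → H)
    (hU : ∀ l ∈ K, U.symm (hl l) = l⁻¹ • hl l + l⁻¹ • h)
    (hinner : ∀ l ∈ K, (inner ℂ (U g) (hl l) : ℂ) = l⁻¹)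
    (hinner0 : (inner ℂ (U g) h : ℂ) = 0) :
    h ∈ (Submodule.span ℂ (hl '' K)).topologicalClosure →
      U.symm h ∈ (Submodule.span ℂ (hl '' K)).topologicalClosure := by
  let T : H →L[ℂ] H := U.symm.toContinuousLinearEquiv.toContinuousLinearMap
    - (innerSL ℂ (U g)).smulRight h
  have hT : ∀ x, T x = U.symm x - inner ℂ (U g) x • h := fun _ ↦ rfl
  have hT_eigen : ∀ l ∈ K, T (hl l) = l⁻¹ • hl l := fun l hlK ↦ by
    rw [hT, hU l hlK, hinner l hlK, add_sub_cancel_right]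
  have hT_span : ∀ x ∈ hl '' K, T x ∈ Submodule.span ℂ (hl '' K) := by
    rintro _ ⟨l, hlK, rfl⟩
    rw [hT_eigen l hlK]
    exact Submodule.smul_mem _ _ (Submodule.subset_span (mem_image_of_mem hl hlK))
  intro hh
  simpa only [hT, hinner0, zero_smul, sub_zero, SetLike.mem_coe] using
    Submodule.mapsTo_topologicalClosure_span T hT_span hh
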